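/- Let {A_t}_{t≥0} be an arbitrary sequence of subsets of {1,…,m} with |A_t| ≥ ηm for all t, and suppose S satisfies the BRIP condition with parameters (η, ε) where ε < 1/7. Let the iterates be generated by encoded proximal gradient: w_{t+1} = argmin_w { ⟨∇p̃^{A_t}(w_t), w − w_t⟩ + λh(w) + (1/(2α))‖w − w_t‖² }, with constant step size 0 < α < 1/M. Then for every t ≥ 1, (1/t)·Σ_{τ=1}^t f(w_τ) − ((1+3ε)/(1−7ε))·f(w*) ≤ (4ε f(w_0) + (1/(2α))‖w_0 − w*‖²) / ((1−7ε) t). -/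

import Mathlib

open Matrix Finset

noncomputable section

namespace Stmt4

/-- `p(w) = (1/2)‖Xw − y‖²`. -/
def pObj {n p : ℕ} (X : Matrix (Fin n) (Fin p) ℝ) (y : Fin n → ℝ)
    (w : Fin p → ℝ) : ℝ :=
  (1 / 2) * ((X *ᵥ w - y) ⬝ᵥ (X *ᵥ w - y))

/-- The original objective `f(w) = p(w) + λ h(w)`. -/
def objF {n p : ℕ} (X : Matrix (Fin n) (Fin p) ℝ) (y : Fin n → ℝ) (lam : ℝ)
    (h : (Fin p → ℝ) → ℝ) (w : Fin p → ℝ) : ℝ :=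
  pObj X y w + lam * h w

/-- `‖S_A z‖² = ∑_{i ∈ A} ‖S_i z‖²`, the quadratic form of `S_Aᵀ S_A`. -/
def encSq {n r m : ℕ} (S : Fin m → Matrix (Fin r) (Fin n) ℝ) (A : Finset (Fin m))
    (z : Fin n → ℝ) : ℝ :=
  ∑ i ∈ A, (S i *ᵥ z) ⬝ᵥ (S i *ᵥ z)

/-- Gradient of `p̃^A(w) = (1/2)‖S_A(Xw − y)‖²`, namely `Xᵀ S_Aᵀ S_A (Xw − y)`. -/
def gradPTilde {n p r m : ℕ} (X : Matrix (Fin n) (Fin p) ℝ) (y : Fin n → ℝ)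
    (S : Fin m → Matrix (Fin r) (Fin n) ℝ) (A : Finset (Fin m)) (w : Fin p → ℝ) :
    Fin p → ℝ :=
  Xᵀ *ᵥ (∑ i ∈ A, (S i)ᵀ *ᵥ (S i *ᵥ (X *ᵥ w - y)))

/-- The proximal subproblem objective
`⟨∇p̃^A(wₜ), v − wₜ⟩ + λ h(v) + (1/(2α))‖v − wₜ‖²`. -/
def proxObj {n p r m : ℕ} (X : Matrix (Fin n) (Fin p) ℝ) (y : Fin n → ℝ)
    (S : Fin m → Matrix (Fin r) (Fin n) ℝ) (lam α : ℝ) (h : (Fin p → ℝ) → ℝ)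
    (A : Finset (Fin m)) (wt v : Fin p → ℝ) : ℝ :=
  gradPTilde X y S A wt ⬝ᵥ (v - wt) + lam * h v +
    (1 / (2 * α)) * ((v - wt) ⬝ᵥ (v - wt))

/-!
The three-point inequality of the proximal step, the exact quadratic expansion of `p̃^{A_t}` and
the BRIP bounds (upper on the curvature term and at `w*`, lower at `w_{t+1}`) give the perturbed
descent inequality
`(1 - 3ε) f(w_{t+1}) ≤ (1 + ε) f(w*) + 2ε f(w_t) + (‖w_t - w*‖² - ‖w_{t+1} - w*‖²) / (2α)`.
Summing it over `t`, the distance terms telescope, and the error terms `2ε f(w_t)` are absorbed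
on the left since `f ≥ 0`.
-/

open Filter Topology

theorem _root_.ConvexOn.le_of_forall_le_add_quadratic {E : Type*} [AddCommGroup E] [Module ℝ E]
    {Φ q : E → ℝ} (hΦ : ConvexOn ℝ Set.univ Φ) (hq : ∀ (θ : ℝ) x, q (θ • x) = θ ^ 2 * q x)
    {u : E} (hu : ∀ v, Φ u ≤ Φ v + q (v - u)) (v : E) : Φ u ≤ Φ v := by
  have hsmall : ∀ θ ∈ Set.Ioo (0 : ℝ) 1, Φ u ≤ Φ v + θ * q (v - u) := by
    rintro θ ⟨hθ0, hθ1⟩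
    have hconv := hΦ.2 (Set.mem_univ u) (Set.mem_univ v) (sub_nonneg.2 hθ1.le) hθ0.le
      (sub_add_cancel 1 θ)
    have hmin := hu ((1 - θ) • u + θ • v)
    rw [show (1 - θ) • u + θ • v - u = θ • (v - u) by module, hq] at hmin
    simp only [smul_eq_mul] at hconv
    refine le_of_mul_le_mul_left ?_ hθ0
    nlinarith
  have hlim : Tendsto (fun θ : ℝ => Φ v + θ * q (v - u)) (𝓝[>] 0) (𝓝 (Φ v)) := by
    refine tendsto_nhdsWithin_of_tendsto_nhds ?_
    exact (by fun_prop : Continuous fun θ : ℝ => Φ v + θ * q (v - u)).tendsto' 0 _ (by simp)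
  exact ge_of_tendsto hlim (eventually_of_mem (Ioo_mem_nhdsGT one_pos) hsmall)

section DotProduct

variable {ι : Type*} [Fintype ι]

theorem dotProduct_self_nonneg {R : Type*} [Ring R] [LinearOrder R] [IsStrictOrderedRing R]
    (v : ι → R) : 0 ≤ v ⬝ᵥ v :=
  Finset.sum_nonneg fun i _ => mul_self_nonneg (v i)

theorem dotProduct_sub_sub_comm (u v : ι → ℝ) : (u - v) ⬝ᵥ (u - v) = (v - u) ⬝ᵥ (v - u) := by
  rw [← neg_sub, neg_dotProduct_neg]

theorem dotProduct_sub_sub_le (u v : ι → ℝ) :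
    (u - v) ⬝ᵥ (u - v) ≤ 2 * (u ⬝ᵥ u) + 2 * (v ⬝ᵥ v) := by
  have hparallelogram : (u - v) ⬝ᵥ (u - v) + (u + v) ⬝ᵥ (u + v) = 2 * (u ⬝ᵥ u) + 2 * (v ⬝ᵥ v) := by
    simp only [dotProduct_add, add_dotProduct, dotProduct_sub, sub_dotProduct]
    ring
  linarith [dotProduct_self_nonneg (u + v)]

theorem convexOn_dotProduct_add_const (b : ι → ℝ) (k : ℝ) :
    ConvexOn ℝ Set.univ fun v => b ⬝ᵥ v + k :=
  ((dotProductBilin ℝ ℝ b).convexOn convex_univ).add_const k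

theorem three_point_of_isMin {φ : (ι → ℝ) → ℝ} (hφ : ConvexOn ℝ Set.univ φ) {c : ℝ}
    {a u : ι → ℝ} (hu : ∀ v, φ u + c * ((u - a) ⬝ᵥ (u - a)) ≤ φ v + c * ((v - a) ⬝ᵥ (v - a)))
    (v : ι → ℝ) :
    φ u + c * ((u - a) ⬝ᵥ (u - a)) + c * ((v - u) ⬝ᵥ (v - u)) ≤
      φ v + c * ((v - a) ⬝ᵥ (v - a)) := by
  -- `‖v - a‖² - ‖v - u‖²` is affine in `v`, so subtracting `c‖v - u‖²` keeps convexity.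
  set Ψ : (ι → ℝ) → ℝ := fun v => φ v + c * ((v - a) ⬝ᵥ (v - a) - (v - u) ⬝ᵥ (v - u))
  have hΨ_eq : Ψ = φ + fun v => (c • (2 : ℝ) • (u - a)) ⬝ᵥ v + c * (a ⬝ᵥ a - u ⬝ᵥ u) := by
    funext v
    simp only [Ψ, Pi.add_apply, dotProduct_sub, sub_dotProduct, smul_dotProduct, smul_eq_mul,
      dotProduct_comm v a, dotProduct_comm v u]
    ring
  have hΨ : ConvexOn ℝ Set.univ Ψ := hΨ_eq ▸ hφ.add (convexOn_dotProduct_add_const _ _)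
  have hΨmin := hΨ.le_of_forall_le_add_quadratic (q := fun x => c * (x ⬝ᵥ x)) (u := u)
    (fun θ x => by simp only [smul_dotProduct, dotProduct_smul, smul_eq_mul]; ring)
    (fun v => by simp only [Ψ, sub_self, zero_dotProduct]; linarith [hu v]) v
  simp only [Ψ, sub_self, zero_dotProduct] at hΨmin
  linarith

end DotProduct

section Encoded

variable {n p r m : ℕ}

def pTilde (X : Matrix (Fin n) (Fin p) ℝ) (y : Fin n → ℝ)
    (S : Fin m → Matrix (Fin r) (Fin n) ℝ) (A : Finset (Fin m)) (w : Fin p → ℝ) : ℝ :=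
  (1 / 2) * encSq S A (X *ᵥ w - y)

theorem encSq_nonneg (S : Fin m → Matrix (Fin r) (Fin n) ℝ) (A : Finset (Fin m))
    (z : Fin n → ℝ) : 0 ≤ encSq S A z :=
  Finset.sum_nonneg fun _ _ => dotProduct_self_nonneg _

theorem encSq_add (S : Fin m → Matrix (Fin r) (Fin n) ℝ) (A : Finset (Fin m))
    (z d : Fin n → ℝ) :
    encSq S A (z + d) =
      encSq S A z + 2 * ((∑ i ∈ A, (S i)ᵀ *ᵥ (S i *ᵥ z)) ⬝ᵥ d) + encSq S A d := by
  simp only [encSq, sum_dotProduct, Finset.mul_sum, ← Finset.sum_add_distrib]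
  refine Finset.sum_congr rfl fun i _ => ?_
  rw [mulVec_transpose, ← dotProduct_mulVec, mulVec_add, dotProduct_add, add_dotProduct,
    add_dotProduct, dotProduct_comm (S i *ᵥ d)]
  ring

theorem pTilde_eq_add_gradPTilde (X : Matrix (Fin n) (Fin p) ℝ) (y : Fin n → ℝ)
    (S : Fin m → Matrix (Fin r) (Fin n) ℝ) (A : Finset (Fin m)) (w v : Fin p → ℝ) :
    pTilde X y S A v =
      pTilde X y S A w + gradPTilde X y S A w ⬝ᵥ (v - w) + (1 / 2) * encSq S A (X *ᵥ (v - w)) := by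
  have hsplit : X *ᵥ v - y = (X *ᵥ w - y) + X *ᵥ (v - w) := by
    rw [mulVec_sub]; abel
  rw [pTilde, pTilde, hsplit, encSq_add, gradPTilde, mulVec_transpose, dotProduct_mulVec]
  ring

theorem objF_nonneg (X : Matrix (Fin n) (Fin p) ℝ) (y : Fin n → ℝ) {lam : ℝ}
    {h : (Fin p → ℝ) → ℝ} (hlam : 0 ≤ lam) (hh : ∀ v, 0 ≤ h v) (w : Fin p → ℝ) :
    0 ≤ objF X y lam h w := by
  have := dotProduct_self_nonneg (X *ᵥ w - y)
  have := mul_nonneg hlam (hh w)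
  rw [objF, pObj]
  linarith

theorem half_encSq_mulVec_sub_le (X : Matrix (Fin n) (Fin p) ℝ) (y : Fin n → ℝ)
    {S : Fin m → Matrix (Fin r) (Fin n) ℝ} {A : Finset (Fin m)} {ε M α : ℝ}
    (hup : ∀ z, encSq S A z ≤ (1 + ε) * (z ⬝ᵥ z))
    (hM : ∀ v : Fin p → ℝ, (X *ᵥ v) ⬝ᵥ (X *ᵥ v) ≤ M * (v ⬝ᵥ v))
    (hα0 : 0 < α) (hαM : α * M ≤ 1) (hε0 : 0 ≤ ε) (u w : Fin p → ℝ) :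
    (1 / 2) * encSq S A (X *ᵥ (u - w)) ≤
      (1 / (2 * α)) * ((u - w) ⬝ᵥ (u - w)) + 2 * ε * (pObj X y u + pObj X y w) := by
  have hsmooth : M * ((u - w) ⬝ᵥ (u - w)) ≤ (1 / α) * ((u - w) ⬝ᵥ (u - w)) :=
    mul_le_mul_of_nonneg_right (by rw [le_div_iff₀ hα0]; linarith) (dotProduct_self_nonneg _)
  have hresid : (X *ᵥ (u - w)) ⬝ᵥ (X *ᵥ (u - w)) ≤
      2 * ((X *ᵥ u - y) ⬝ᵥ (X *ᵥ u - y)) + 2 * ((X *ᵥ w - y) ⬝ᵥ (X *ᵥ w - y)) := by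
    rw [show X *ᵥ (u - w) = (X *ᵥ u - y) - (X *ᵥ w - y) by rw [mulVec_sub]; abel]
    exact dotProduct_sub_sub_le _ _
  have hscale : 1 / (2 * α) * ((u - w) ⬝ᵥ (u - w)) =
      (1 / 2) * ((1 / α) * ((u - w) ⬝ᵥ (u - w))) := by
    ring
  rw [pObj, pObj, hscale]
  linarith [hup (X *ᵥ (u - w)), hM (u - w), mul_le_mul_of_nonneg_left hresid hε0]

theorem objF_descent (X : Matrix (Fin n) (Fin p) ℝ) (y : Fin n → ℝ)
    {S : Fin m → Matrix (Fin r) (Fin n) ℝ} {A : Finset (Fin m)} {ε lam M α : ℝ}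
    {h : (Fin p → ℝ) → ℝ}
    (hBRIP : ∀ z, (1 - ε) * (z ⬝ᵥ z) ≤ encSq S A z ∧ encSq S A z ≤ (1 + ε) * (z ⬝ᵥ z))
    (hM : ∀ v : Fin p → ℝ, (X *ᵥ v) ⬝ᵥ (X *ᵥ v) ≤ M * (v ⬝ᵥ v))
    (hα0 : 0 < α) (hαM : α * M ≤ 1) (hε0 : 0 ≤ ε) (hlam : 0 ≤ lam) (hh : ∀ v, 0 ≤ h v)
    (hconv : ConvexOn ℝ Set.univ h) {wt w' : Fin p → ℝ}
    (hprox : ∀ v, proxObj X y S lam α h A wt w' ≤ proxObj X y S lam α h A wt v)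
    (wstar : Fin p → ℝ) :
    (1 - 3 * ε) * objF X y lam h w' ≤
      (1 + ε) * objF X y lam h wstar + 2 * ε * objF X y lam h wt +
        (1 / (2 * α)) * ((wt - wstar) ⬝ᵥ (wt - wstar) - (w' - wstar) ⬝ᵥ (w' - wstar)) := by
  set g := gradPTilde X y S A wt
  have hφ : ConvexOn ℝ Set.univ fun v => g ⬝ᵥ (v - wt) + lam * h v := by
    refine ((convexOn_dotProduct_add_const g (-(g ⬝ᵥ wt))).add (hconv.smul hlam)).congr
      fun v _ => ?_
    simp only [Pi.add_apply, dotProduct_sub, smul_eq_mul]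
    ring
  have hthree := three_point_of_isMin (c := 1 / (2 * α)) (a := wt) hφ hprox wstar
  rw [dotProduct_sub_sub_comm wstar wt, dotProduct_sub_sub_comm wstar w'] at hthree
  have hexpand' := pTilde_eq_add_gradPTilde X y S A wt w'
  have hexpandstar := pTilde_eq_add_gradPTilde X y S A wt wstar
  have hcurv := half_encSq_mulVec_sub_le X y (fun z => (hBRIP z).2) hM hα0 hαM hε0 w' wt
  have hlow := (hBRIP (X *ᵥ w' - y)).1
  have hupp := (hBRIP (X *ᵥ wstar - y)).2
  have hnn := encSq_nonneg S A (X *ᵥ (wstar - wt))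
  have hreg' := mul_nonneg hε0 (mul_nonneg hlam (hh w'))
  have hregstar := mul_nonneg hε0 (mul_nonneg hlam (hh wstar))
  have hregt := mul_nonneg hε0 (mul_nonneg hlam (hh wt))
  simp only [objF, pObj, pTilde] at *
  linarith

end Encoded

theorem sum_Icc_le_of_descent {a D : ℕ → ℝ} {b ε : ℝ}
    (hstep : ∀ τ, (1 - 3 * ε) * a (τ + 1) ≤ b + 2 * ε * a τ + (D τ - D (τ + 1))) (T : ℕ) :
    (1 - 3 * ε) * ∑ τ ∈ Finset.Icc 1 T, a τ + D T + 2 * ε * a T ≤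
      T * b + 2 * ε * (a 0 + ∑ τ ∈ Finset.Icc 1 T, a τ) + D 0 := by
  induction T with
  | zero => simp [add_comm]
  | succ T ih =>
    rw [Finset.sum_Icc_succ_top (by omega)]
    push_cast
    linarith [hstep T]

theorem average_sub_le_of_descent {a D : ℕ → ℝ} {F ε : ℝ} (ha : ∀ τ, 0 ≤ a τ)
    (hD : ∀ τ, 0 ≤ D τ) (hF : 0 ≤ F) (hε0 : 0 ≤ ε) (hε : ε < 1 / 7)
    (hstep : ∀ τ, (1 - 3 * ε) * a (τ + 1) ≤ (1 + ε) * F + 2 * ε * a τ + (D τ - D (τ + 1)))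
    {t : ℕ} (ht : 1 ≤ t) :
    (1 / (t : ℝ)) * ∑ τ ∈ Finset.Icc 1 t, a τ - ((1 + 3 * ε) / (1 - 7 * ε)) * F ≤
      (4 * ε * a 0 + D 0) / ((1 - 7 * ε) * t) := by
  have htel := sum_Icc_le_of_descent hstep t
  set A := ∑ τ ∈ Finset.Icc 1 t, a τ
  have hA : 0 ≤ A := Finset.sum_nonneg fun τ _ => ha τ
  have ht0 : (0 : ℝ) < t := by exact_mod_cast ht
  have hgap : 0 < 1 - 7 * ε := by linarith
  have hsum : (1 - 7 * ε) * A ≤ t * ((1 + 3 * ε) * F) + (4 * ε * a 0 + D 0) := by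
    linarith [hD t, mul_nonneg hε0 hA, mul_nonneg hε0 (ha t), mul_nonneg hε0 (ha 0),
      mul_nonneg hε0 (mul_nonneg ht0.le hF)]
  rw [le_div_iff₀ (by positivity)]
  calc (1 / (t : ℝ) * A - (1 + 3 * ε) / (1 - 7 * ε) * F) * ((1 - 7 * ε) * t)
      = (1 - 7 * ε) * A * (t / t) - t * ((1 + 3 * ε) * F) * ((1 - 7 * ε) / (1 - 7 * ε)) := by
        ring
    _ = (1 - 7 * ε) * A - t * ((1 + 3 * ε) * F) := by
        rw [div_self ht0.ne', div_self hgap.ne', mul_one, mul_one]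
    _ ≤ 4 * ε * a 0 + D 0 := by linarith

theorem encoded_proximal_gradient_convergence_general
    {n p r m : ℕ}
    (X : Matrix (Fin n) (Fin p) ℝ) (y : Fin n → ℝ)
    (S : Fin m → Matrix (Fin r) (Fin n) ℝ)
    (η ε lam M α : ℝ)
    (h : (Fin p → ℝ) → ℝ)
    (A : ℕ → Finset (Fin m)) (w : ℕ → Fin p → ℝ) (wstar : Fin p → ℝ)
    -- BRIP parameters
    (hε0 : 0 < ε) (hε : ε < 1 / 7)
    -- BRIP condition
    (hBRIP : ∀ B : Finset (Fin m), η * m ≤ (B.card : ℝ) →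
      ∀ z : Fin n → ℝ,
        (1 - ε) * (z ⬝ᵥ z) ≤ encSq S B z ∧ encSq S B z ≤ (1 + ε) * (z ⬝ᵥ z))
    (hA : ∀ t, η * m ≤ (((A t).card : ℕ) : ℝ))
    -- M is (an upper bound for) the largest eigenvalue of XᵀX
    (hM : ∀ v : Fin p → ℝ, (X *ᵥ v) ⬝ᵥ (X *ᵥ v) ≤ M * (v ⬝ᵥ v))
    -- h is convex and nonnegative (possibly non-smooth), λ ≥ 0
    (hlam : 0 ≤ lam) (hh : ∀ v, 0 ≤ h v)
    (hconv : ConvexOn ℝ Set.univ h)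
    -- step size 0 < α < 1/M
    (hα0 : 0 < α) (hα : α < 1 / M)
    -- the iterates: w_{t+1} minimizes the proximal subproblem at w_t
    (hiter : ∀ t, ∀ v : Fin p → ℝ,
      proxObj X y S lam α h (A t) (w t) (w (t + 1)) ≤
        proxObj X y S lam α h (A t) (w t) v) :
    ∀ t : ℕ, 1 ≤ t →
      (1 / (t : ℝ)) * (∑ τ ∈ Finset.Icc 1 t, objF X y lam h (w τ)) -
          ((1 + 3 * ε) / (1 - 7 * ε)) * objF X y lam h wstar ≤
        (4 * ε * objF X y lam h (w 0) +
            (1 / (2 * α)) * ((w 0 - wstar) ⬝ᵥ (w 0 - wstar))) /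
          ((1 - 7 * ε) * (t : ℝ)) := by
  intro t ht
  have hαM : α * M ≤ 1 := by
    rcases le_or_gt M 0 with hM0 | hM0
    · nlinarith
    · exact ((lt_div_iff₀ hM0).1 hα).le
  refine average_sub_le_of_descent (a := fun τ => objF X y lam h (w τ))
    (D := fun τ => (1 / (2 * α)) * ((w τ - wstar) ⬝ᵥ (w τ - wstar)))
    (fun τ => objF_nonneg X y hlam hh (w τ))
    (fun τ => mul_nonneg (by positivity) (dotProduct_self_nonneg _))
    (objF_nonneg X y hlam hh wstar) hε0.le hε (fun τ => ?_) ht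
  have hdescent := objF_descent X y (hBRIP (A τ) (hA τ)) hM hα0 hαM hε0.le hlam hh hconv
    (hiter τ) wstar
  linarith

/-- Theorem 3(1): convergence of encoded proximal gradient. -/
theorem encoded_proximal_gradient_convergence
    {n p r m : ℕ}
    (X : Matrix (Fin n) (Fin p) ℝ) (y : Fin n → ℝ)
    (S : Fin m → Matrix (Fin r) (Fin n) ℝ)
    (η ε lam M α : ℝ)
    (h : (Fin p → ℝ) → ℝ)
    (A : ℕ → Finset (Fin m)) (w : ℕ → Fin p → ℝ) (wstar : Fin p → ℝ)
    -- BRIP parameters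
    (hη0 : 0 < η) (hη1 : η ≤ 1) (hε0 : 0 < ε) (hε : ε < 1 / 7)
    -- BRIP condition
    (hBRIP : ∀ B : Finset (Fin m), η * m ≤ (B.card : ℝ) →
      ∀ z : Fin n → ℝ,
        (1 - ε) * (z ⬝ᵥ z) ≤ encSq S B z ∧ encSq S B z ≤ (1 + ε) * (z ⬝ᵥ z))
    (hA : ∀ t, η * m ≤ (((A t).card : ℕ) : ℝ))
    -- M is (an upper bound for) the largest eigenvalue of XᵀX
    (hM : ∀ v : Fin p → ℝ, (X *ᵥ v) ⬝ᵥ (X *ᵥ v) ≤ M * (v ⬝ᵥ v))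
    -- h is convex and nonnegative (possibly non-smooth), λ ≥ 0
    (hlam : 0 ≤ lam) (hh : ∀ v, 0 ≤ h v)
    (hconv : ConvexOn ℝ Set.univ h)
    -- step size 0 < α < 1/M
    (hα0 : 0 < α) (hα : α < 1 / M)
    -- the iterates: w_{t+1} minimizes the proximal subproblem at w_t
    (hiter : ∀ t, ∀ v : Fin p → ℝ,
      proxObj X y S lam α h (A t) (w t) (w (t + 1)) ≤
        proxObj X y S lam α h (A t) (w t) v)
    -- w* is a minimizer of f
    (hwstar : ∀ v, objF X y lam h wstar ≤ objF X y lam h v) :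
    ∀ t : ℕ, 1 ≤ t →
      (1 / (t : ℝ)) * (∑ τ ∈ Finset.Icc 1 t, objF X y lam h (w τ)) -
          ((1 + 3 * ε) / (1 - 7 * ε)) * objF X y lam h wstar ≤
        (4 * ε * objF X y lam h (w 0) +
            (1 / (2 * α)) * ((w 0 - wstar) ⬝ᵥ (w 0 - wstar))) /
          ((1 - 7 * ε) * (t : ℝ)) :=
  encoded_proximal_gradient_convergence_general X y S η ε lam M α h A w wstar hε0 hε hBRIP hA hM
    hlam hh hconv hα0 hα hiter

end Stmt4
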